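/- arXiv:2106.00319 — 7 statements merged into one kernel-verified Lean document; each statement's English description precedes it below -/
import Mathlib

section
/- Consider the Bayesian principal-agent instance with ℓ types where type θ_k (k = 1,...,ℓ) has probability μ_k = 2^{2(k−ℓ)}/N with N = Σ_{k=1}^{ℓ} 2^{2(k−ℓ)}, action a_1 deterministically yields outcome ω_k with reward 2^{-k} at cost c_k = 2^{-k}(1 − 2^{-k}), and action a_2 yields reward 0 at cost 0. The contract with payments p_{ω_j} = 2^{-j}(1 − 2^{-j}) for j ≤ ℓ and p = 0 otherwise implements a_1 for every type and gives the principal an overall expected utility of ℓ · 2^{-2ℓ}/N. -/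
/-- In the lower-bound instance for linear contracts, the contract with payments
`p_{ω_j} = 2^{-j}(1 - 2^{-j})` implements action `a_1` for every type and yields
overall principal expected utility `ℓ · 2^{-2ℓ} / N`. -/
theorem stmt5 (ℓ : ℕ) (hℓ : 1 ≤ ℓ)
    (N : ℝ) (hN : N = ∑ k ∈ Finset.Icc 1 ℓ, (2:ℝ)^(2*((k:ℤ) - ℓ)))
    (μ r c p : ℕ → ℝ)
    (hμ : ∀ k, μ k = (2:ℝ)^(2*((k:ℤ) - ℓ)) / N)
    (hr : ∀ k, r k = (1/2:ℝ)^k)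
    (hc : ∀ k, c k = (1/2:ℝ)^k * (1 - (1/2:ℝ)^k))
    (hp : ∀ k, p k = (1/2:ℝ)^k * (1 - (1/2:ℝ)^k)) :
    (∀ k ∈ Finset.Icc 1 ℓ, 0 ≤ p k - c k) ∧
    ∑ k ∈ Finset.Icc 1 ℓ, μ k * (r k - p k) = ℓ * (1/2:ℝ)^(2*ℓ) / N := by
  have h2 : (2:ℝ) ≠ 0 := two_ne_zero
  constructor
  · intro k _
    rw [hp, hc]
    simp
  · have key : ∀ k : ℕ, μ k * (r k - p k) = (1/2:ℝ)^(2*ℓ) / N := by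
      intro k
      rw [hμ, hr, hp]
      have hrp : (1/2:ℝ)^k - (1/2:ℝ)^k * (1 - (1/2:ℝ)^k) = (1/2:ℝ)^(2*k) := by
        rw [two_mul, pow_add]; ring
      rw [hrp]
      have : (2:ℝ)^(2*((k:ℤ)-ℓ)) * (1/2:ℝ)^(2*k) = (1/2:ℝ)^(2*ℓ) := by
        rw [one_div, inv_pow, inv_pow, ← zpow_natCast (2:ℝ) (2*k),
          ← zpow_natCast (2:ℝ) (2*ℓ), ← zpow_neg, ← zpow_neg, ← zpow_add₀ h2]
        congr 1
        push_cast
        ring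
      rw [div_mul_eq_mul_div, this]
    rw [Finset.sum_congr rfl (fun k _ => key k), Finset.sum_const,
      Nat.card_Icc]
    simp [mul_div_assoc]
end

section
/- In the same instance, for any α ∈ [0,1), the overall principal's expected utility under the linear contract with parameter α is at most 2·2^{-2ℓ}/N, where N = Σ_{k=1}^{ℓ} 2^{2(k−ℓ)}. Consequently, the ratio of the optimal contract's utility ℓ·2^{-2ℓ}/N to the best linear contract's utility is at least ℓ/2, so the worst-case multiplicative loss of linear contracts grows at least linearly in the number of types ℓ. -/
/-!
Type `θ_k` takes the contract exactly when `1 - α ≤ 2^{-k}`, and then contributes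
`μ_k (1 - α) 2^{-k} = (1 - α) 2^k · 2^{-2ℓ} / N`. Bounding `1 - α` by `2^{-K}` for the largest
such `K`, the geometric sum `∑_{k ≤ K} 2^k < 2^{K+1}` caps the total at `2 · 2^{-2ℓ} / N`.
-/

open Finset

lemma sum_mul_two_pow_le_two {S : Finset ℕ} {c : ℝ} (hc : ∀ k ∈ S, c ≤ (1 / 2 : ℝ) ^ k) :
    ∑ k ∈ S, c * 2 ^ k ≤ 2 := by
  rcases S.eq_empty_or_nonempty with rfl | hS
  · simp
  set K := S.max' hS
  have hgeom : ∑ k ∈ S, (2 : ℝ) ^ k ≤ 2 ^ (K + 1) := by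
    exact_mod_cast (Nat.geomSum_lt le_rfl fun k hk => Nat.lt_succ_of_le (S.le_max' k hk)).le
  calc ∑ k ∈ S, c * 2 ^ k
      ≤ ∑ k ∈ S, (1 / 2 : ℝ) ^ K * 2 ^ k :=
        sum_le_sum fun k _ => mul_le_mul_of_nonneg_right (hc K (S.max'_mem hS)) (by positivity)
    _ = (1 / 2 : ℝ) ^ K * ∑ k ∈ S, (2 : ℝ) ^ k := (mul_sum ..).symm
    _ ≤ (1 / 2 : ℝ) ^ K * 2 ^ (K + 1) := by gcongr
    _ = 2 := by rw [pow_succ, ← mul_assoc, ← mul_pow]; norm_num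

lemma two_zpow_mul_half_pow (k ℓ : ℕ) :
    (2 : ℝ) ^ (2 * ((k : ℤ) - ℓ)) * (1 / 2) ^ k = 2 ^ k * (1 / 2) ^ (2 * ℓ) := by
  have h : (2 * ((k : ℤ) - ℓ)) = (k : ℤ) + k + -(2 * ℓ : ℕ) := by push_cast; ring
  rw [h, zpow_add₀ two_ne_zero, zpow_add₀ two_ne_zero, zpow_neg, zpow_natCast, zpow_natCast]
  field_simp
  rw [← mul_pow, ← mul_pow]
  norm_num

theorem stmt7_general (ℓ : ℕ)
    (N : ℝ) (hN : N = ∑ k ∈ Finset.Icc 1 ℓ, (2:ℝ)^(2*((k:ℤ) - ℓ)))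
    (μ : ℕ → ℝ) (hμ : ∀ k, μ k = (2:ℝ)^(2*((k:ℤ) - ℓ)) / N)
    (α : ℝ) :
    (∑ k ∈ (Finset.Icc 1 ℓ).filter
        (fun k => (1/2:ℝ)^k * (1 - (1/2:ℝ)^k) ≤ α * (1/2:ℝ)^k),
        μ k * (1 - α) * (1/2:ℝ)^k) ≤ 2 * (1/2:ℝ)^(2*ℓ) / N ∧
    ((ℓ:ℝ)/2) * (∑ k ∈ (Finset.Icc 1 ℓ).filter
        (fun k => (1/2:ℝ)^k * (1 - (1/2:ℝ)^k) ≤ α * (1/2:ℝ)^k),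
        μ k * (1 - α) * (1/2:ℝ)^k) ≤ ℓ * (1/2:ℝ)^(2*ℓ) / N := by
  set S := (Icc 1 ℓ).filter fun k => (1/2:ℝ)^k * (1 - (1/2:ℝ)^k) ≤ α * (1/2:ℝ)^k
  have hN0 : 0 ≤ N := hN ▸ sum_nonneg fun k _ => by positivity
  have hplays : ∀ k ∈ S, 1 - α ≤ (1/2:ℝ)^k := fun k hk => by
    have hpos : (0:ℝ) < (1/2)^k := by positivity
    nlinarith [(mem_filter.mp hk).2]
  have hutil : ∑ k ∈ S, μ k * (1 - α) * (1/2:ℝ)^k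
      = (∑ k ∈ S, (1 - α) * 2^k) * (1/2:ℝ)^(2*ℓ) / N := by
    rw [sum_mul, sum_div]
    refine sum_congr rfl fun k _ => ?_
    rw [hμ, mul_right_comm, div_mul_eq_mul_div, two_zpow_mul_half_pow]
    ring
  have hbound : ∑ k ∈ S, μ k * (1 - α) * (1/2:ℝ)^k ≤ 2 * (1/2:ℝ)^(2*ℓ) / N := by
    rw [hutil]
    gcongr
    exact sum_mul_two_pow_le_two hplays
  refine ⟨hbound, ?_⟩
  calc ((ℓ:ℝ)/2) * ∑ k ∈ S, μ k * (1 - α) * (1/2:ℝ)^k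
      ≤ ((ℓ:ℝ)/2) * (2 * (1/2:ℝ)^(2*ℓ) / N) := by gcongr
    _ = ℓ * (1/2:ℝ)^(2*ℓ) / N := by ring

/-- In the lower-bound instance, any linear contract with `α ∈ [0,1)` yields overall
principal expected utility at most `2 · 2^{-2ℓ} / N`; hence the optimal utility
`ℓ · 2^{-2ℓ} / N` is at least `ℓ/2` times the linear contract's utility. -/
theorem stmt7 (ℓ : ℕ) (hℓ : 1 ≤ ℓ)
    (N : ℝ) (hN : N = ∑ k ∈ Finset.Icc 1 ℓ, (2:ℝ)^(2*((k:ℤ) - ℓ)))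
    (μ : ℕ → ℝ) (hμ : ∀ k, μ k = (2:ℝ)^(2*((k:ℤ) - ℓ)) / N)
    (α : ℝ) (hα0 : 0 ≤ α) (hα1 : α < 1) :
    (∑ k ∈ (Finset.Icc 1 ℓ).filter
        (fun k => (1/2:ℝ)^k * (1 - (1/2:ℝ)^k) ≤ α * (1/2:ℝ)^k),
        μ k * (1 - α) * (1/2:ℝ)^k) ≤ 2 * (1/2:ℝ)^(2*ℓ) / N ∧
    ((ℓ:ℝ)/2) * (∑ k ∈ (Finset.Icc 1 ℓ).filter
        (fun k => (1/2:ℝ)^k * (1 - (1/2:ℝ)^k) ≤ α * (1/2:ℝ)^k),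
        μ k * (1 - α) * (1/2:ℝ)^k) ≤ ℓ * (1/2:ℝ)^(2*ℓ) / N :=
  stmt7_general ℓ N hN μ hμ α
end

section
/- Fix ρ ≥ 1 and let γ = ⌊4ρ⌋. In the non-Bayesian instance with outcomes ω_1, ω_2, ω_3 (rewards 1, 0, 0), actions a_1,...,a_γ with F_{a_1,ω_1} = F_{a_1,ω_2} = 1/2, F_{a_i,ω_1} = 2^{-i}, F_{a_i,ω_3} = 1 − 2^{-i} for i > 1, costs c_{a_i} = 2^{-i} − (γ−i+2)2^{-γ-2}, plus a zero-cost action ā leading to ω_3: the contract with p_{ω_2} = 1 − (γ+1)2^{-γ-1} and p_{ω_1} = p_{ω_3} = 0 implements action a_1, yielding principal expected utility (γ+1)·2^{-γ-2}. -/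
lemma natCast_mul_half_pow_le_one (k : ℕ) : (k : ℝ) * (1 / 2 : ℝ) ^ k ≤ 1 := by
  have hk : (k : ℝ) ≤ 2 ^ k := by exact_mod_cast (Nat.lt_two_pow_self (n := k)).le
  rw [one_div, inv_pow, ← div_eq_mul_inv, div_le_one (by positivity)]
  exact hk

lemma natCast_sub_mul_half_pow_le (i m : ℕ) :
    ((m : ℝ) - i) * (1 / 2 : ℝ) ^ m ≤ (1 / 2 : ℝ) ^ i := by
  rcases le_or_gt i m with him | hmi
  · obtain ⟨k, rfl⟩ := Nat.exists_eq_add_of_le him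
    calc ((↑(i + k) : ℝ) - i) * (1 / 2 : ℝ) ^ (i + k)
        = (k * (1 / 2 : ℝ) ^ k) * (1 / 2 : ℝ) ^ i := by push_cast; ring
      _ ≤ 1 * (1 / 2 : ℝ) ^ i := by gcongr; exact natCast_mul_half_pow_le_one k
      _ = (1 / 2 : ℝ) ^ i := one_mul _
  · have : (m : ℝ) - i ≤ 0 := by
      have : (m : ℝ) < i := by exact_mod_cast hmi
      linarith
    exact (mul_nonpos_of_nonpos_of_nonneg this (by positivity)).trans (by positivity)

theorem stmt8_general (γ : ℕ)
    (c : ℕ → ℝ)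
    (hc : ∀ i, c i = (1/2:ℝ)^i - ((γ:ℝ) - i + 2) * (1/2:ℝ)^(γ+2))
    (p2 : ℝ) (hp2 : p2 = 1 - ((γ:ℝ)+1) * (1/2:ℝ)^(γ+1)) :
    (1/2) * p2 - c 1 = 0 ∧
    (∀ i ∈ Finset.Icc 2 γ, -(c i) ≤ (1/2) * p2 - c 1) ∧
    1/2 - (1/2) * p2 = ((γ:ℝ)+1) * (1/2:ℝ)^(γ+2) := by
  have h_indiff : (1/2) * p2 - c 1 = 0 := by
    rw [hp2, hc]; push_cast; ring
  refine ⟨h_indiff, fun i _ => ?_, by rw [hp2]; ring⟩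
  have h_cost : 0 ≤ c i := by
    have := natCast_sub_mul_half_pow_le i (γ + 2)
    rw [hc]; push_cast at this; linarith
  linarith

/-- In the non-Bayesian impossibility instance with `γ = ⌊4ρ⌋`, the contract paying
`p_{ω_2} = 1 - (γ+1)2^{-γ-1}` implements `a_1` (agent utility `0`, every deviation gives
at most `0`) and yields principal expected utility `(γ+1)·2^{-γ-2}`. -/
theorem stmt8 (ρ : ℝ) (hρ : 1 ≤ ρ) (γ : ℕ) (hγ : γ = ⌊4*ρ⌋₊)
    (c : ℕ → ℝ)
    (hc : ∀ i, c i = (1/2:ℝ)^i - ((γ:ℝ) - i + 2) * (1/2:ℝ)^(γ+2))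
    (p2 : ℝ) (hp2 : p2 = 1 - ((γ:ℝ)+1) * (1/2:ℝ)^(γ+1)) :
    (1/2) * p2 - c 1 = 0 ∧
    (∀ i ∈ Finset.Icc 2 γ, -(c i) ≤ (1/2) * p2 - c 1) ∧
    1/2 - (1/2) * p2 = ((γ:ℝ)+1) * (1/2:ℝ)^(γ+2) :=
  stmt8_general γ c hc p2 hp2
end

section
/- In the same non-Bayesian instance (γ = ⌊4ρ⌋), if a linear contract with parameter α ∈ [0,1] (payments p_ω = α r_ω) implements some action a_i with 1 < i < γ, then the incentive compatibility of a_i versus a_{i+1} forces p_{ω_1} = α ≥ 1 − 2^{i−γ−1}, so the principal's expected utility (1 − α)·2^{-i} is at most 2^{-γ-1}. -/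
/-- In the same non-Bayesian instance, if a linear contract with parameter `α`
implements an action `a_i` with `1 < i < γ`, then IC against `a_{i+1}` forces
`α ≥ 1 - 2^{i-γ-1}`, so the principal's utility `(1-α)·2^{-i}` is at most `2^{-γ-1}`. -/
theorem stmt9 (γ : ℕ) (c : ℕ → ℝ)
    (hc : ∀ i, c i = (1/2:ℝ)^i - ((γ:ℝ) - i + 2) * (1/2:ℝ)^(γ+2))
    (α : ℝ) (hα : α ∈ Set.Icc (0:ℝ) 1)
    (i : ℕ) (hi1 : 1 < i) (hiγ : i < γ)
    (hIC : (1/2:ℝ)^(i+1) * α - c (i+1) ≤ (1/2:ℝ)^i * α - c i) :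
    1 - (1/2:ℝ)^(γ+1-i) ≤ α ∧ (1 - α) * (1/2:ℝ)^i ≤ (1/2:ℝ)^(γ+1) := by
  have e1 : (1/2:ℝ)^(γ+2) = (1/2:ℝ)^(γ+1-i) * (1/2:ℝ)^(i+1) := by
    rw [← pow_add]; congr 1; omega
  have e2 : (1/2:ℝ)^(γ+1-i) * (1/2:ℝ)^i = (1/2:ℝ)^(γ+1) := by
    rw [← pow_add]; congr 1; omega
  rw [hc, hc] at hIC
  push_cast at hIC
  have hp : (0:ℝ) < (1/2:ℝ)^(i+1) := by positivity
  have hpow : (1/2:ℝ)^i = 2 * (1/2:ℝ)^(i+1) := by rw [pow_succ]; ring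
  have h2 : (1/2:ℝ)^(i+1) * (1-α) ≤ (1/2:ℝ)^(i+1) * (1/2:ℝ)^(γ+1-i) := by
    have h4 : (1/2:ℝ)^i * α = 2 * ((1/2:ℝ)^(i+1) * α) := by rw [hpow]; ring
    rw [mul_comm ((1/2:ℝ)^(i+1)) ((1/2:ℝ)^(γ+1-i)), ← e1]; nlinarith [hIC, h4, hpow]
  have key : 1 - α ≤ (1/2:ℝ)^(γ+1-i) := le_of_mul_le_mul_left h2 hp
  constructor
  · linarith
  · have hip : (0:ℝ) < (1/2:ℝ)^i := by positivity
    calc (1 - α) * (1/2:ℝ)^i ≤ (1/2:ℝ)^(γ+1-i) * (1/2:ℝ)^i :=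
          mul_le_mul_of_nonneg_right key hip.le
      _ = (1/2:ℝ)^(γ+1) := e2
end

section
/- For every ρ ≥ 1, setting γ = ⌊4ρ⌋, it holds that (1/ρ)·(γ+1)·2^{-γ-2} − 2^{-4ρ-2} > 2^{-γ-1}. Hence in the instance above, no linear contract provides a (ρ, 2^{-4ρ-2})-bi-approximation of the optimal contract, since the optimal value exceeds (γ+1)2^{-γ-2} while every linear contract gives at most 2^{-γ-1}. -/
/-- For every `ρ ≥ 1` with `γ = ⌊4ρ⌋`, one has
`(1/ρ)·(γ+1)·2^{-γ-2} - 2^{-4ρ-2} > 2^{-γ-1}`: no linear contract provides a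
`(ρ, 2^{-4ρ-2})`-bi-approximation in the above instance. -/
theorem stmt10 (ρ : ℝ) (hρ : 1 ≤ ρ) (γ : ℕ) (hγ : γ = ⌊4*ρ⌋₊) :
    (1/2:ℝ)^(γ+1) < (1/ρ) * ((γ:ℝ)+1) * (1/2:ℝ)^(γ+2) - (2:ℝ)^(-4*ρ-2) := by
  have hρ0 : (0:ℝ) < ρ := lt_of_lt_of_le one_pos hρ
  have h0 : (0:ℝ) ≤ 4*ρ := by linarith
  have hle : (γ:ℝ) ≤ 4*ρ := by rw [hγ]; exact Nat.floor_le h0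
  have hlt : 4*ρ < (γ:ℝ) + 1 := by rw [hγ]; exact Nat.lt_floor_add_one _
  set a : ℝ := (1/2:ℝ)^(γ+2) with ha
  have ha0 : 0 < a := by positivity
  -- bound the rpow term
  have h2 : (2:ℝ)^(-4*ρ-2) ≤ a := by
    have : (2:ℝ)^(-4*ρ-2) ≤ (2:ℝ)^(-(γ:ℝ)-2) :=
      Real.rpow_le_rpow_of_exponent_le one_le_two (by linarith)
    have heq : (2:ℝ)^(-(γ:ℝ)-2) = a := by
      rw [ha, show (-(γ:ℝ)-2) = -((γ:ℝ)+2) by ring, Real.rpow_neg (by norm_num),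
        show ((γ:ℝ)+2) = ((γ+2:ℕ):ℝ) by push_cast; ring, Real.rpow_natCast,
        one_div, inv_pow]
    linarith [this, heq.ge]
  -- main term bound
  have h1 : 4 * a < (1/ρ) * ((γ:ℝ)+1) * a := by
    have : 4 < (1/ρ) * ((γ:ℝ)+1) := by
      rw [div_mul_eq_mul_div, lt_div_iff₀ hρ0]
      linarith
    nlinarith
  have hpow : (1/2:ℝ)^(γ+1) = 2 * a := by
    rw [ha, pow_succ]; ring
  linarith
end

section
/- In a Bayesian principal-agent instance with ℓ types, n actions, and m outcomes, every vertex of every polytope P(a) = ∩_θ P(a_θ, θ) (over all action tuples a ∈ A^Θ) is the intersection of m hyperplanes drawn from a common family of at most ℓ·n² + m hyperplanes, so the union of all such vertex sets has cardinality at most C(ℓn² + m, m). -/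
/-!
A vertex of a polyhedron `{p | b j ≤ f j p, j ∈ σ}` in an `m`-dimensional space is the unique
point at which some `m` of its constraints with linearly independent functionals are tight:
otherwise a direction killed by all tight constraints would let one move both ways inside the
polyhedron. Every IC polytope `P(a)` is cut out by a subfamily of one common family of
`ℓn² + m` constraints (an IC inequality for each type and ordered pair of actions, and the
nonnegativity constraints), so assigning to each vertex its `m` tight constraints injects the
union of all vertex sets into the `m`-subsets of that family.
-/

open Finset

/-- The set of contracts (nonnegative payment vectors) implementing the action `astar θ`
for every type `θ`. -/
def ICset {Θ A Ω : Type*} [Fintype Ω]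
    (F : Θ → A → Ω → ℝ) (c : Θ → A → ℝ) (astar : Θ → A) : Set (Ω → ℝ) :=
  {p | (∀ ω, 0 ≤ p ω) ∧ ∀ θ a,
    ∑ ω, p ω * F θ a ω - c θ a ≤ ∑ ω, p ω * F θ (astar θ) ω - c θ (astar θ)}

open Filter Module Submodule Topology

theorem Submodule.span_eq_top_iff_forall_apply_eq_zero {K V : Type*} [Field K] [AddCommGroup V]
    [Module K V] [FiniteDimensional K V] {s : Set (Dual K V)} :
    span K s = ⊤ ↔ ∀ v : V, (∀ φ ∈ s, φ v = 0) → v = 0 := by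
  rw [← Subspace.dualCoannihilator_dualAnnihilator_eq (W := span K s),
    dualAnnihilator_eq_top_iff, eq_bot_iff, ← SetLike.coe_subset_coe,
    coe_dualCoannihilator_span]
  simp [Set.subset_def]

theorem exists_finset_card_eq_finrank_span_eq_top {ι K V : Type*} [Finite ι] [Field K]
    [AddCommGroup V] [Module K V] [FiniteDimensional K V] (f : ι → Dual K V) {T : Set ι}
    (hT : span K (f '' T) = ⊤) :
    ∃ S : Finset ι, ↑S ⊆ T ∧ S.card = finrank K V ∧ span K (f '' S) = ⊤ := by
  obtain ⟨B, hBT, -, hTB, hB⟩ :=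
    exists_linearIndepOn_extension (linearIndepOn_empty K f) (Set.empty_subset T)
  have hspan : span K (f '' B) = ⊤ := top_le_iff.mp (hT ▸ span_le.mpr hTB)
  set S := B.toFinite.toFinset
  have hSB : (S : Set ι) = B := B.toFinite.coe_toFinset
  have hspanS : span K (f '' S) = ⊤ := hSB ▸ hspan
  have hrank := finrank_span_eq_card (hSB ▸ hB : LinearIndependent K fun j : (S : Set ι) ↦ f j)
  rw [← Set.image_eq_range, hspanS, finrank_top, Subspace.dual_finrank_eq] at hrank
  exact ⟨S, hSB ▸ hBT, by simpa using hrank.symm, hspanS⟩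

section Polyhedron

variable {ι V : Type*} [AddCommGroup V] [Module ℝ V]

def polyhedron (f : ι → Dual ℝ V) (b : ι → ℝ) (σ : Set ι) : Set V :=
  {x | ∀ j ∈ σ, b j ≤ f j x}

def basicSolutions (f : ι → Dual ℝ V) (b : ι → ℝ) : Set V :=
  {x | ∃ S : Finset ι, S.card = finrank ℝ V ∧ (∀ j ∈ S, f j x = b j) ∧ span ℝ (f '' S) = ⊤}

variable {f : ι → Dual ℝ V} {b : ι → ℝ} {σ : Set ι}

theorem eventually_add_smul_mem_polyhedron [Finite ι] {x v : V} (hx : x ∈ polyhedron f b σ)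
    (hv : ∀ j ∈ σ, f j x = b j → f j v = 0) :
    ∀ᶠ t in 𝓝 (0 : ℝ), x + t • v ∈ polyhedron f b σ := by
  change ∀ᶠ t in 𝓝 (0 : ℝ), ∀ j ∈ σ, b j ≤ f j (x + t • v)
  rw [eventually_all_finite σ.toFinite]
  intro j hj
  by_cases htight : f j x = b j
  · filter_upwards with t
    simp [htight, hv j hj htight]
  · have hslack : b j < f j x := (hx j hj).lt_of_ne (Ne.symm htight)
    have hlim : Tendsto (fun t : ℝ ↦ f j (x + t • v)) (𝓝 0) (𝓝 (f j x)) := by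
      simp only [map_add, map_smul, smul_eq_mul]
      exact (continuous_const.add (continuous_id.mul continuous_const)).tendsto' 0 _ (by simp)
    filter_upwards [hlim.eventually_const_lt hslack] with t ht using ht.le

theorem eq_zero_of_mem_extremePoints_polyhedron [Finite ι] {x v : V}
    (hx : x ∈ Set.extremePoints ℝ (polyhedron f b σ))
    (hv : ∀ j ∈ σ, f j x = b j → f j v = 0) : v = 0 := by
  have hv' : ∀ j ∈ σ, f j x = b j → f j (-v) = 0 := fun j hj h ↦ by simp [hv j hj h]
  obtain ⟨t, ⟨hplus, hminus⟩, ht⟩ :=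
    (((eventually_add_smul_mem_polyhedron hx.1 hv).and
      (eventually_add_smul_mem_polyhedron hx.1 hv')).filter_mono nhdsWithin_le_nhds |>.and
      (self_mem_nhdsWithin : ∀ᶠ t in 𝓝[≠] (0 : ℝ), t ≠ 0)).exists
  rw [smul_neg, ← sub_eq_add_neg] at hminus
  have hsub : x - t • v = x := hx.2 hminus hplus (mem_openSegment_sub_add x (t • v))
  exact (smul_eq_zero.mp (sub_eq_self.mp hsub)).resolve_left ht

theorem extremePoints_polyhedron_subset_basicSolutions [Finite ι] [FiniteDimensional ℝ V] :
    Set.extremePoints ℝ (polyhedron f b σ) ⊆ basicSolutions f b := by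
  intro x hx
  have hT : span ℝ (f '' {j ∈ σ | f j x = b j}) = ⊤ :=
    span_eq_top_iff_forall_apply_eq_zero.mpr fun v hv ↦
      eq_zero_of_mem_extremePoints_polyhedron hx fun j hj htight ↦ hv _ ⟨j, ⟨hj, htight⟩, rfl⟩
  obtain ⟨S, hST, hcard, hspan⟩ := exists_finset_card_eq_finrank_span_eq_top f hT
  exact ⟨S, hcard, fun j hj ↦ (hST hj).2, hspan⟩

theorem basicSolutions_finite_and_ncard_le [Fintype ι] [FiniteDimensional ℝ V]
    (f : ι → Dual ℝ V) (b : ι → ℝ) :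
    (basicSolutions f b).Finite ∧
      (basicSolutions f b).ncard ≤ (Fintype.card ι).choose (finrank ℝ V) := by
  choose! tight hcard htight hspan using fun x (hx : x ∈ basicSolutions f b) ↦ hx
  have hmaps : Set.MapsTo tight (basicSolutions f b)
      ((Finset.univ : Finset ι).powersetCard (finrank ℝ V) : Set (Finset ι)) :=
    fun x hx ↦ by simp [hcard x hx]
  have hinj : Set.InjOn tight (basicSolutions f b) := by
    intro x hx y hy hxy
    refine sub_eq_zero.mp (span_eq_top_iff_forall_apply_eq_zero.mp (hspan x hx) _ ?_)
    rintro _ ⟨j, hj, rfl⟩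
    rw [map_sub, htight x hx j hj, htight y hy j (hxy ▸ hj), sub_self]
  refine ⟨(Finset.finite_toSet _).of_injOn hmaps hinj, ?_⟩
  calc (basicSolutions f b).ncard
      ≤ ((Finset.univ : Finset ι).powersetCard (finrank ℝ V) : Set (Finset ι)).ncard :=
        Set.ncard_le_ncard_of_injOn tight hmaps hinj
    _ = (Fintype.card ι).choose (finrank ℝ V) := by
        rw [Set.ncard_coe_finset, Finset.card_powersetCard, Finset.card_univ]

end Polyhedron

section IncentiveCompatibility

variable {Θ A Ω : Type*} [Fintype Ω]

/-- `inl (θ, a, a')` is the functional of the constraint that type `θ` weakly prefers `a` to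
`a'`, and `inr ω` that of the constraint `0 ≤ p ω`. -/
def icFunctional (F : Θ → A → Ω → ℝ) : (Θ × A × A) ⊕ Ω → Dual ℝ (Ω → ℝ)
  | .inl (θ, a, a') => Fintype.linearCombination ℝ (F θ a) - Fintype.linearCombination ℝ (F θ a')
  | .inr ω => LinearMap.proj ω

def icBound (c : Θ → A → ℝ) : (Θ × A × A) ⊕ Ω → ℝ
  | .inl (θ, a, a') => c θ a - c θ a'
  | .inr _ => 0

def icConstraints (astar : Θ → A) : Set ((Θ × A × A) ⊕ Ω) :=
  Set.range .inr ∪ Set.range (fun q : Θ × A ↦ .inl (q.1, astar q.1, q.2))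

theorem ICset_eq_polyhedron (F : Θ → A → Ω → ℝ) (c : Θ → A → ℝ) (astar : Θ → A) :
    ICset F c astar = polyhedron (icFunctional F) (icBound c) (icConstraints astar) := by
  ext p
  simp only [ICset, polyhedron, Set.mem_ofPred_eq, icConstraints, Set.mem_union, or_imp, forall_and, Set.forall_mem_range, Prod.forall,
    icBound, icFunctional, LinearMap.sub_apply, Fintype.linearCombination_apply,
    LinearMap.proj_apply, smul_eq_mul]
  exact and_congr_right' (forall₂_congr fun θ a ↦ by constructor <;> intro h <;> linarith)

end IncentiveCompatibility

theorem stmt13_general {Θ A Ω : Type*} [Fintype Θ] [Fintype A] [Fintype Ω]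
    (F : Θ → A → Ω → ℝ) (c : Θ → A → ℝ) :
    (⋃ astar : Θ → A, Set.extremePoints ℝ (ICset F c astar)).Finite ∧
    (⋃ astar : Θ → A, Set.extremePoints ℝ (ICset F c astar)).ncard ≤
      (Fintype.card Θ * (Fintype.card A)^2 + Fintype.card Ω).choose (Fintype.card Ω) := by
  have hsub : (⋃ astar : Θ → A, Set.extremePoints ℝ (ICset F c astar)) ⊆
      basicSolutions (icFunctional F) (icBound c) :=
    Set.iUnion_subset fun astar ↦
      ICset_eq_polyhedron F c astar ▸ extremePoints_polyhedron_subset_basicSolutions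
  obtain ⟨hfin, hcard⟩ := basicSolutions_finite_and_ncard_le (icFunctional F) (icBound c)
  refine ⟨hfin.subset hsub, (Set.ncard_le_ncard hsub hfin).trans ?_⟩
  simpa [Fintype.card_sum, Fintype.card_prod, sq, Module.finrank_fintype_fun_eq_card] using hcard

/-- The union over all action tuples of the vertex sets of the IC polytopes is finite,
of cardinality at most `C(ℓn² + m, m)` where `ℓ, n, m` are the numbers of types,
actions, and outcomes. -/
theorem stmt13 {Θ A Ω : Type*} [Fintype Θ] [Fintype A] [Fintype Ω]
    (F : Θ → A → Ω → ℝ) (hF : ∀ θ a ω, 0 ≤ F θ a ω) (hF1 : ∀ θ a, ∑ ω, F θ a ω = 1)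
    (c : Θ → A → ℝ) (hc : ∀ θ a, 0 ≤ c θ a) :
    (⋃ astar : Θ → A, Set.extremePoints ℝ (ICset F c astar)).Finite ∧
    (⋃ astar : Θ → A, Set.extremePoints ℝ (ICset F c astar)).ncard ≤
      (Fintype.card Θ * (Fintype.card A)^2 + Fintype.card Ω).choose (Fintype.card Ω) :=
  stmt13_general F c
end

section
/- Let γ ∈ ℕ, and suppose nonnegative reals p₁ (payment on ω_1), p_u, p_v, p₀ satisfy the IC inequality 2^{-i-1}p₁ + 2^{-i-2}p_u + 2^{-i-2}p_v + (1 − 2^{-i})p₀ − (2^{-i-1} − (γ−i+2)2^{-γ-3}) ≥ 2^{-i-2}p₁ + 2^{-i-3}p_u + 2^{-i-3}p_v + (1 − 2^{-i-1})p₀ − (2^{-i-2} − (γ−i+1)2^{-γ-3}) for some 1 ≤ i < γ. Then 2p₁ + p_u + p_v ≥ 2 − 2^{-γ+i}, and consequently the principal's utility 2^{-i-1} − (2^{-i-1}p₁ + 2^{-i-2}p_u + 2^{-i-2}p_v + (1 − 2^{-i})p₀) is at most 2^{-γ-2}. -/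
/-- Soundness computation in the GAP-LABEL-COVER reduction: the IC constraint of
`a_{iσσ'}` against `a_{i+1,σσ'}` forces `2p₁ + p_u + p_v ≥ 2 - 2^{-γ+i}`, hence the
principal's utility from this agent is at most `2^{-γ-2}`. -/
theorem stmt16 (γ i : ℕ) (hi1 : 1 ≤ i) (hiγ : i < γ)
    (p1 pu pv p0 : ℝ) (h1 : 0 ≤ p1) (hu : 0 ≤ pu) (hv : 0 ≤ pv) (h0 : 0 ≤ p0)
    (hIC : (1/2:ℝ)^(i+2)*p1 + (1/2:ℝ)^(i+3)*pu + (1/2:ℝ)^(i+3)*pv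
        + (1-(1/2:ℝ)^(i+1))*p0 - ((1/2:ℝ)^(i+2) - ((γ:ℝ)-i+1)*(1/2:ℝ)^(γ+3))
      ≤ (1/2:ℝ)^(i+1)*p1 + (1/2:ℝ)^(i+2)*pu + (1/2:ℝ)^(i+2)*pv
        + (1-(1/2:ℝ)^i)*p0 - ((1/2:ℝ)^(i+1) - ((γ:ℝ)-i+2)*(1/2:ℝ)^(γ+3))) :
    2 - (1/2:ℝ)^(γ-i) ≤ 2*p1 + pu + pv ∧
    (1/2:ℝ)^(i+1) - ((1/2:ℝ)^(i+1)*p1 + (1/2:ℝ)^(i+2)*pu + (1/2:ℝ)^(i+2)*pv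
      + (1-(1/2:ℝ)^i)*p0) ≤ (1/2:ℝ)^(γ+2) := by
  set a : ℝ := (1/2:ℝ)^i with ha_def
  set b : ℝ := (1/2:ℝ)^(γ-i) with hb_def
  have ha : 0 < a := by positivity
  have ha1 : a ≤ 1 := by
    rw [ha_def]
    exact pow_le_one₀ (by norm_num) (by norm_num)
  have hb : 0 < b := by positivity
  have hab : b * a = (1/2:ℝ)^γ := by
    rw [hb_def, ha_def, ← pow_add]
    congr 1
    omega
  have e1 : (1/2:ℝ)^(i+1) = a/2 := by rw [pow_succ]; ring
  have e2 : (1/2:ℝ)^(i+2) = a/4 := by rw [pow_add]; ring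
  have e3 : (1/2:ℝ)^(i+3) = a/8 := by rw [pow_add]; ring
  have eg3 : (1/2:ℝ)^(γ+3) = b*a/8 := by rw [pow_add, ← hab]; ring
  have eg2 : (1/2:ℝ)^(γ+2) = b*a/4 := by rw [pow_add, ← hab]; ring
  rw [e1, e2, e3, eg3] at hIC
  rw [e1, e2, eg2]
  have key : a*(2 - b) ≤ a*(2*p1 + pu + pv) := by nlinarith [mul_nonneg ha.le h0]
  constructor
  · exact le_of_mul_le_mul_left key ha
  · linarith [key, mul_nonneg (sub_nonneg.mpr ha1) h0, mul_le_mul_of_nonneg_left key (by norm_num : (0:ℝ) ≤ 1/4)]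
end
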